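/- For n ≥ 3, the function 𝓕 : (-1,∞) × ℝ^{n-1} → ℝ defined by 𝓕(s,z) = (1+s)^{n-1} √(1 + |z|²/(1+s)²) is convex on some neighborhood of the origin (0,0) ∈ ℝ × ℝ^{n-1}. -/

import Mathlib

/-!
Where `u = 1 + s > 0` we have `𝓕 = u^M W` with `W = √(u² + |z|²)` and `M = n - 2 ≥ 1`. Along a line
`t ↦ (a + b t, z + t v)` the second derivative of `u^M W` is `u^{M-2} / W³` times a quadratic
expression in `b` and `⟨z, v⟩`, which Cauchy–Schwarz and a discriminant estimate show to be
nonnegative as long as `M |z|² ≤ u²`. This condition cuts out a convex cone containing the ball of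
radius `1/n` around the origin.
-/

/-- The perimeter integrand `𝓕(s,z) = (1+s)^{n-1} √(1 + |z|²/(1+s)²)`,
viewed as a function on `ℝ × ℝ^{n-1}`. -/
noncomputable def perimIntegrand (n : ℕ) (p : ℝ × EuclideanSpace ℝ (Fin (n - 1))) : ℝ :=
  (1 + p.1) ^ (n - 1) * Real.sqrt (1 + ‖p.2‖ ^ 2 / (1 + p.1) ^ 2)

open Real Set

theorem convexOn_of_forall_convexOn_segment {F : Type*} [AddCommGroup F] [Module ℝ F]
    {s : Set F} {f : F → ℝ} (hs : Convex ℝ s)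
    (h : ∀ x ∈ s, ∀ y ∈ s, ConvexOn ℝ (Icc 0 1) fun t : ℝ => f (x + t • (y - x))) :
    ConvexOn ℝ s f := by
  refine ⟨hs, fun x hx y hy a b ha hb hab => ?_⟩
  have hxy := (h x hx y hy).2 (x := 0) (y := 1) (by simp) (by simp) ha hb hab
  have hcomb : x + b • (y - x) = a • x + b • y := by
    obtain rfl : a = 1 - b := by linarith
    module
  simpa [hcomb] using hxy

/-- With `W² = u² + Q`, `Q = |z|²`, `p = ⟨z, v⟩`, `e = |v|²`, this is `u^{2-M} W³` times the second
derivative of `t ↦ u^M W` along the line `t ↦ (u + b t, z + t v)`. -/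
lemma second_variation_nonneg {M u b Q p e : ℝ} (hM : 1 ≤ M) (hQ : 0 ≤ Q) (he : 0 ≤ e)
    (hp : p ^ 2 ≤ Q * e) (hMQ : M * Q ≤ u ^ 2) :
    0 ≤ M * (M - 1) * b ^ 2 * (u ^ 2 + Q) ^ 2 + 2 * M * b * u * (u * b + p) * (u ^ 2 + Q)
      + u ^ 2 * ((b ^ 2 + e) * (u ^ 2 + Q) - (u * b + p) ^ 2) := by
  set A := M * (M - 1) * (u ^ 2 + Q) ^ 2 + 2 * M * u ^ 2 * (u ^ 2 + Q) + u ^ 2 * Q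
  set C := (M - 1) * u ^ 2 + M * Q
  have hE : M * (M - 1) * b ^ 2 * (u ^ 2 + Q) ^ 2 + 2 * M * b * u * (u * b + p) * (u ^ 2 + Q)
      + u ^ 2 * ((b ^ 2 + e) * (u ^ 2 + Q) - (u * b + p) ^ 2)
      = (A * b ^ 2 + e * u ^ 4 + 2 * C * u * b * p) + u ^ 2 * (Q * e - p ^ 2) := by ring
  have hA : 2 * M * u ^ 2 * (u ^ 2 + Q) ≤ A := by
    have : 0 ≤ M * (M - 1) := by nlinarith
    have : 0 ≤ u ^ 2 * Q := by positivity
    nlinarith [sq_nonneg (u ^ 2 + Q)]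
  have hM₀ : 0 ≤ M := by linarith
  have hA₀ : 0 ≤ A := le_trans (by positivity) hA
  have hC₀ : 0 ≤ C := by nlinarith [sq_nonneg u]
  have hC : C ≤ M * (u ^ 2 + Q) := by linarith [sq_nonneg u]
  have hQu : Q ≤ u ^ 2 := by nlinarith
  have hdisc : C ^ 2 * Q ≤ A * u ^ 2 :=
    calc C ^ 2 * Q ≤ (M * (u ^ 2 + Q)) ^ 2 * Q := by gcongr
      _ = M * (u ^ 2 + Q) * (M * Q) * (u ^ 2 + Q) := by ring
      _ ≤ M * (u ^ 2 + Q) * u ^ 2 * (2 * u ^ 2) := by gcongr; linarith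
      _ ≤ A * u ^ 2 := by nlinarith [sq_nonneg u]
  have hcross : |2 * C * u * b * p| ≤ A * b ^ 2 + e * u ^ 4 := by
    refine abs_le_of_sq_le_sq ?_ (by positivity)
    calc (2 * C * u * b * p) ^ 2 = 4 * (C ^ 2 * u ^ 2 * b ^ 2) * p ^ 2 := by ring
      _ ≤ 4 * (C ^ 2 * u ^ 2 * b ^ 2) * (Q * e) := by gcongr
      _ = 4 * (C ^ 2 * Q) * (u ^ 2 * b ^ 2 * e) := by ring
      _ ≤ 4 * (A * u ^ 2) * (u ^ 2 * b ^ 2 * e) := by gcongr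
      _ ≤ (A * b ^ 2 + e * u ^ 4) ^ 2 := by nlinarith [sq_nonneg (A * b ^ 2 - e * u ^ 4)]
  rw [hE]
  have := mul_nonneg (sq_nonneg u) (sub_nonneg.2 hp)
  linarith [neg_abs_le (2 * C * u * b * p)]

/-- Second derivative of `u^M W` for affine `u` with slope `b` and `W' = P / W`. -/
theorem hasDerivAt_rpow_mul_deriv {u P W : ℝ → ℝ} {M b S t : ℝ} (hu : HasDerivAt u b t)
    (hP : HasDerivAt P S t) (hW : HasDerivAt W (P t / W t) t) (hu_pos : 0 < u t)
    (hW_pos : 0 < W t) :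
    HasDerivAt (fun s => b * M * u s ^ (M - 1) * W s + u s ^ M * (P s / W s))
      (u t ^ M / (u t ^ 2 * W t ^ 3) * (M * (M - 1) * b ^ 2 * (W t ^ 2) ^ 2
        + 2 * M * b * u t * P t * W t ^ 2 + u t ^ 2 * (S * W t ^ 2 - P t ^ 2))) t := by
  refine ((hu.rpow_const (p := M - 1) (Or.inl hu_pos.ne')).const_mul (b * M)).mul hW |>.add
    ((hu.rpow_const (Or.inl hu_pos.ne')).mul (hP.div hW hW_pos.ne')) |>.congr_deriv ?_
  simp only [Pi.div_apply]
  rw [Real.rpow_sub_one hu_pos.ne', Real.rpow_sub_one hu_pos.ne']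
  field_simp
  ring

/-- The second-order cone `√M ‖z‖ ≤ 1 + s` with vertex `(-1, 0)`, vertex removed. -/
def perimCone {F : Type*} [Norm F] (M : ℝ) : Set (ℝ × F) :=
  {q | 0 < 1 + q.1 ∧ M * ‖q.2‖ ^ 2 ≤ (1 + q.1) ^ 2}

theorem ball_subset_perimCone {F : Type*} [SeminormedAddCommGroup F] {n : ℝ} (hn : 3 ≤ n) :
    Metric.ball (0 : ℝ × F) (1 / n) ⊆ perimCone (n - 2) := by
  intro q hq
  rw [mem_ball_zero_iff] at hq
  obtain ⟨hq₁, -⟩ := abs_lt.mp ((norm_fst_le q).trans_lt hq)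
  have hq₂ : ‖q.2‖ < 1 / n := (norm_snd_le q).trans_lt hq
  have hn_inv : 1 / n ≤ 1 / 3 := by gcongr
  refine ⟨by linarith, ?_⟩
  calc (n - 2) * ‖q.2‖ ^ 2 ≤ n * (1 / n) ^ 2 := by gcongr; linarith
    _ = 1 / n := by field_simp
    _ ≤ (1 + q.1) ^ 2 := by nlinarith

section InnerProductSpace

variable {E : Type*} [NormedAddCommGroup E] [InnerProductSpace ℝ E]

theorem convexOn_rpow_mul_sqrt_along_line {M a b : ℝ} {z v : E} {D : Set ℝ} (hM : 1 ≤ M)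
    (hD : Convex ℝ D) (hpos : ∀ t ∈ D, 0 < a + b * t)
    (hcone : ∀ t ∈ D, M * ‖z + t • v‖ ^ 2 ≤ (a + b * t) ^ 2) :
    ConvexOn ℝ D fun t => (a + b * t) ^ M * √((a + b * t) ^ 2 + ‖z + t • v‖ ^ 2) := by
  let u : ℝ → ℝ := fun s => a + b * s
  let Q : ℝ → ℝ := fun s => ‖z + s • v‖ ^ 2
  let p : ℝ → ℝ := fun s => inner ℝ (z + s • v) v
  let P : ℝ → ℝ := fun s => u s * b + p s
  let W : ℝ → ℝ := fun s => √(u s ^ 2 + Q s)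
  show ConvexOn ℝ D fun t => u t ^ M * W t
  have hline (t : ℝ) : HasDerivAt (fun s : ℝ => z + s • v) v t := by
    simpa using ((hasDerivAt_id t).smul_const v).const_add z
  have hu (t : ℝ) : HasDerivAt u b t :=
    (((hasDerivAt_id' t).const_mul b).const_add a).congr_deriv (mul_one b)
  have hP (t : ℝ) : HasDerivAt P (b ^ 2 + ‖v‖ ^ 2) t := by
    have hp : HasDerivAt p (‖v‖ ^ 2) t := by
      simpa [real_inner_self_eq_norm_sq] using (hline t).inner ℝ (hasDerivAt_const t v)
    exact (((hu t).mul_const b).add hp).congr_deriv (by ring)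
  have hR_pos {t : ℝ} (ht : 0 < u t) : 0 < u t ^ 2 + Q t := by
    have : 0 ≤ Q t := sq_nonneg _
    positivity
  have hW_pos {t : ℝ} (ht : 0 < u t) : 0 < W t := Real.sqrt_pos.2 (hR_pos ht)
  have hW {t : ℝ} (ht : 0 < u t) : HasDerivAt W (P t / W t) t := by
    refine (((hu t).pow 2).add (hline t).norm_sq).sqrt (hR_pos ht).ne' |>.congr_deriv ?_
    change _ / (2 * W t) = _
    field_simp
    ring
  have hf {t : ℝ} (ht : 0 < u t) := ((hu t).rpow_const (p := M) (Or.inl ht.ne')).mul (hW ht)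
  have hf' {t : ℝ} (ht : 0 < u t) :=
    hasDerivAt_rpow_mul_deriv (M := M) (hu t) (hP t) (hW ht) ht (hW_pos ht)
  refine convexOn_of_hasDerivWithinAt2_nonneg hD
    (fun t ht => (hf (hpos t ht)).continuousAt.continuousWithinAt)
    (fun t ht => (hf (hpos t (interior_subset ht))).hasDerivWithinAt)
    (fun t ht => (hf' (hpos t (interior_subset ht))).hasDerivWithinAt) fun t ht => ?_
  have htD := interior_subset ht
  have hCS : p t ^ 2 ≤ Q t * ‖v‖ ^ 2 := by
    have := pow_le_pow_left₀ (abs_nonneg _) (abs_real_inner_le_norm (z + t • v) v) 2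
    rwa [sq_abs, mul_pow] at this
  have hW_pos := hW_pos (hpos t htD)
  rw [Real.sq_sqrt (hR_pos (hpos t htD)).le]
  exact mul_nonneg (div_nonneg (Real.rpow_nonneg (hpos t htD).le _) (by positivity))
    (second_variation_nonneg hM (sq_nonneg _) (sq_nonneg _) hCS (hcone t htD))

theorem convexOn_rpow_mul_sqrt_of_subset_perimCone {M : ℝ} (hM : 1 ≤ M) {s : Set (ℝ × E)}
    (hs : Convex ℝ s) (hsK : s ⊆ perimCone M) :
    ConvexOn ℝ s fun q => (1 + q.1) ^ M * √((1 + q.1) ^ 2 + ‖q.2‖ ^ 2) := by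
  refine convexOn_of_forall_convexOn_segment hs fun x hx y hy => ?_
  have hseg (t : ℝ) : x + t • (y - x) = (x.1 + (y.1 - x.1) * t, x.2 + t • (y.2 - x.2)) := by
    ext <;> simp [mul_comm]
  have hK (t : ℝ) (ht : t ∈ Icc (0 : ℝ) 1) := hsK (hs.add_smul_sub_mem hx hy ht)
  simp only [perimCone, Set.mem_ofPred_eq, hseg, ← add_assoc] at hK ⊢
  exact convexOn_rpow_mul_sqrt_along_line hM (convex_Icc 0 1) (fun t ht => (hK t ht).1)
    fun t ht => (hK t ht).2

end InnerProductSpace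

theorem perimIntegrand_eq_rpow_mul_sqrt {n : ℕ} (hn : 2 ≤ n)
    {q : ℝ × EuclideanSpace ℝ (Fin (n - 1))} (hq : 0 < 1 + q.1) :
    perimIntegrand n q = (1 + q.1) ^ ((n : ℝ) - 2) * √((1 + q.1) ^ 2 + ‖q.2‖ ^ 2) := by
  have hexp : ((n - 1 : ℕ) : ℝ) = ((n : ℝ) - 2) + 1 := by
    rw [Nat.cast_sub (by omega)]
    ring
  have hrad : 1 + ‖q.2‖ ^ 2 / (1 + q.1) ^ 2 = ((1 + q.1) ^ 2 + ‖q.2‖ ^ 2) / (1 + q.1) ^ 2 := by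
    field_simp
  rw [perimIntegrand, ← Real.rpow_natCast, hexp, Real.rpow_add_one hq.ne', hrad,
    Real.sqrt_div' _ (by positivity), Real.sqrt_sq hq.le]
  field_simp

theorem stmt_7 (n : ℕ) (hn : 3 ≤ n) :
    ∃ δ > (0 : ℝ),
      ConvexOn ℝ (Metric.ball (0 : ℝ × EuclideanSpace ℝ (Fin (n - 1))) δ)
        (perimIntegrand n) := by
  have hn' : (3 : ℝ) ≤ n := by exact_mod_cast hn
  have hK := ball_subset_perimCone (F := EuclideanSpace ℝ (Fin (n - 1))) hn'
  refine ⟨1 / n, by positivity, ?_⟩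
  exact (convexOn_rpow_mul_sqrt_of_subset_perimCone (by linarith) (convex_ball _ _) hK).congr
    fun q hq => (perimIntegrand_eq_rpow_mul_sqrt (by omega) (hK hq).1).symm
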